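/- Let S be a substring-free set of strings over the DNA alphabet and consider an execution of MGREEDY-RC on S, producing the set T whose elements are the strings ⟨s'_{i1},…,s'_{ir}⟩ corresponding to the cycles C = s'_{i1},…,s'_{ir},s'_{i1} it closes. Suppose that for each such cycle C there is an index j (1 ≤ j ≤ r) and a string x_C such that ⟨s'_{i(j+1)},…,s'_{ir},s'_{i1},…,s'_{ij}⟩ is a suffix of x_C. Then ||T|| ≤ ||A||, where ||T|| = Σ_C |⟨s'_{i1},…,s'_{ir}⟩| and ||A|| = Σ_C |x_C|. -/

import Mathlib

/-- The DNA alphabet. -/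
inductive DNA : Type
  | A | T | G | C
  deriving DecidableEq, Repr

/-- Complement of a DNA base: a↔t, g↔c. -/
def DNA.compl : DNA → DNA
  | .A => .T
  | .T => .A
  | .G => .C
  | .C => .G

/-- Strings over the DNA alphabet. -/
abbrev Str : Type := List DNA

/-- Reverse complement of a string. -/
def rc (s : Str) : Str := (s.map DNA.compl).reverse

/-- An approximate solution for the SCS-RC instance `S`: a string containing,
for each `s ∈ S`, either `s` or its reverse complement as a substring. -/
def ApproxSol (S : Finset Str) (u : Str) : Prop :=
  ∀ s ∈ S, s <:+: u ∨ rc s <:+: u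

/-- `OPT S` is the minimum length of an approximate solution for the SCS-RC instance `S`. -/
noncomputable def OPT (S : Finset Str) : ℕ :=
  sInf {n | ∃ u : Str, ApproxSol S u ∧ u.length = n}

/-- `S` is substring-free: no string of `S ∪ S̄^R` is a substring of another. -/
def SubstrFree (S : Finset Str) : Prop :=
  ∀ x, (x ∈ S ∨ rc x ∈ S) → ∀ y, (y ∈ S ∨ rc y ∈ S) → x ≠ y → ¬ x <:+: y

/-- `ov x y`: the length of the longest string `v` such that `x = u ++ v` and
`y = v ++ w` for nonempty `u`, `w`. -/
noncomputable def ov (x y : Str) : ℕ :=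
  sSup {k | ∃ v : Str, v.length = k ∧ (∃ u : Str, u ≠ [] ∧ x = u ++ v) ∧
        (∃ w : Str, w ≠ [] ∧ y = v ++ w)}

/-- `prefStr x y = pref(x, y)`: the prefix of `x` with respect to `y`. -/
noncomputable def prefStr (x y : Str) : Str := x.take (x.length - ov x y)

/-- `distStr x y = dist(x, y) = |x| - ov(x, y)`. -/
noncomputable def distStr (x y : Str) : ℕ := x.length - ov x y

/-- The merge `⟨x, y⟩ = pref(x, y) ++ y`. -/
noncomputable def mergeStr (x y : Str) : Str := prefStr x y ++ y

/-- `superstr [x1, …, xr] = ⟨x1, …, xr⟩ = pref(x1,x2) ⋯ pref(x_{r-1},x_r) ++ x_r`. -/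
noncomputable def superstr : List Str → Str
  | [] => []
  | [x] => x
  | x :: y :: rest => prefStr x y ++ superstr (y :: rest)

/-- `‖S‖`: the total length of the strings of the finite set `S`. -/
def normS (S : Finset Str) : ℕ := ∑ s ∈ S, s.length

/-- Pairs `(x, y)` of strings from the collection `S` or their reverse complements,
with `x = y`, or with `x ≠ y` and `rc x ≠ y`, as considered by MGREEDY-RC. -/
def ValidPair (S : Finset Str) (x y : Str) : Prop :=
  (x ∈ S ∨ rc x ∈ S) ∧ (y ∈ S ∨ rc y ∈ S) ∧ (x = y ∨ (x ≠ y ∧ rc x ≠ y))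

/-- `MGreedyExec S T`: some execution of MGREEDY-RC starting from the collection `S`
(under some tie-breaking among pairs of maximum overlap) produces the set `T`. -/
inductive MGreedyExec : Finset Str → Finset Str → Prop
  | done : MGreedyExec ∅ ∅
  | close (S T : Finset Str) (x : Str)
      (hx : x ∈ S ∨ rc x ∈ S)
      (hmax : ∀ a b, ValidPair S a b → ov a b ≤ ov x x)
      (h : MGreedyExec (S \ {x, rc x}) T) :
      MGreedyExec S (insert x T)
  | merge (S T : Finset Str) (x y : Str)
      (hx : x ∈ S ∨ rc x ∈ S) (hy : y ∈ S ∨ rc y ∈ S)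
      (hne : x ≠ y) (hrc : rc x ≠ y)
      (hmax : ∀ a b, ValidPair S a b → ov a b ≤ ov x y)
      (h : MGreedyExec (insert (mergeStr x y) (S \ {x, rc x, y, rc y})) T) :
      MGreedyExec S T

/-- `GreedyExec S u`: some execution of GREEDY-RC starting from the collection `S`
(under some tie-breaking among pairs of maximum overlap) outputs the string `u`. -/
inductive GreedyExec : Finset Str → Str → Prop
  | single (x : Str) : GreedyExec {x} x
  | merge (S : Finset Str) (u x y : Str)
      (hx : x ∈ S ∨ rc x ∈ S) (hy : y ∈ S ∨ rc y ∈ S)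
      (hne : x ≠ y) (hrc : rc x ≠ y)
      (hmax : ∀ a b, (a ∈ S ∨ rc a ∈ S) → (b ∈ S ∨ rc b ∈ S) → a ≠ b → rc a ≠ b →
        ov a b ≤ ov x y)
      (hcard : 1 < S.card)
      (h : GreedyExec (insert (mergeStr x y) (S \ {x, rc x, y, rc y})) u) :
      GreedyExec S u

/-- Reverse complement of a path: the path of the reverse complements, reversed. -/
def rcPath (p : List Str) : List Str := (p.map rc).reverse

/-- Valid pairs for the path-level description of MGREEDY-RC, where each collection
element is the path of original strings composing it, its string value being `superstr`. -/
def ValidPairP (P : Finset (List Str)) (p q : List Str) : Prop :=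
  (p ∈ P ∨ rcPath p ∈ P) ∧ (q ∈ P ∨ rcPath q ∈ P) ∧
  (superstr p = superstr q ∨ (superstr p ≠ superstr q ∧ rc (superstr p) ≠ superstr q))

/-- `MGreedyCyc P C`: the path-level description of an execution of MGREEDY-RC.
Starting from the collection of paths `P`, merging the paths `p` and `q` (adding the
edge from the last vertex of `p` to the first of `q`) when the corresponding strings
are merged, and closing the path `p` into the cycle `p` (with the edge from its last
vertex to its first) when the corresponding string is moved to `T`, some execution
produces the set of closed cycles `C`. -/
inductive MGreedyCyc : Finset (List Str) → Finset (List Str) → Prop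
  | done : MGreedyCyc ∅ ∅
  | close (P C : Finset (List Str)) (p : List Str)
      (hp : p ∈ P ∨ rcPath p ∈ P)
      (hmax : ∀ q₁ q₂, ValidPairP P q₁ q₂ →
        ov (superstr q₁) (superstr q₂) ≤ ov (superstr p) (superstr p))
      (h : MGreedyCyc (P \ {p, rcPath p}) C) :
      MGreedyCyc P (insert p C)
  | merge (P C : Finset (List Str)) (p q : List Str)
      (hp : p ∈ P ∨ rcPath p ∈ P) (hq : q ∈ P ∨ rcPath q ∈ P)
      (hne : superstr p ≠ superstr q) (hrc : rc (superstr p) ≠ superstr q)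
      (hmax : ∀ q₁ q₂, ValidPairP P q₁ q₂ →
        ov (superstr q₁) (superstr q₂) ≤ ov (superstr p) (superstr q))
      (h : MGreedyCyc (insert (p ++ q) (P \ {p, rcPath p, q, rcPath q})) C) :
      MGreedyCyc P C

/-- The weight of the cycle `x1, …, xr, x1` given by the list `[x1, …, xr]`:
`Σ_{i=1}^{r} dist(x_i, x_{i+1})` with indices modulo `r`. -/
noncomputable def cycleWeight (c : List Str) : ℕ :=
  ((c.zip (c.rotate 1)).map fun p => distStr p.1 p.2).sum

/-- `C` is a cycle cover of the distance graph `G_S`: a set of vertex-disjoint cycles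
on vertices of `S ∪ S̄^R` such that for each `s ∈ S` exactly one of `s` and `rc s`
is contained in the cycles. -/
def IsCycleCover (S : Finset Str) (C : Finset (List Str)) : Prop :=
  (∀ c ∈ C, c ≠ []) ∧
  (∀ c ∈ C, c.Nodup) ∧
  (∀ c ∈ C, ∀ d ∈ C, c ≠ d → ∀ x ∈ c, x ∉ d) ∧
  (∀ c ∈ C, ∀ x ∈ c, x ∈ S ∨ rc x ∈ S) ∧
  (∀ s ∈ S, Xor' (∃ c ∈ C, s ∈ c) (∃ c ∈ C, rc s ∈ c))

/-- The total weight of a cycle cover. -/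
noncomputable def coverWeight (C : Finset (List Str)) : ℕ := ∑ c ∈ C, cycleWeight c

/-- `minCoverWeight S = w(CYC(G_S))`: the minimum total weight of a cycle cover of `G_S`. -/
noncomputable def minCoverWeight (S : Finset Str) : ℕ :=
  sInf {n | ∃ C : Finset (List Str), IsCycleCover S C ∧ coverWeight C = n}

/-- `x` is a factor of `s`: `s = x^i ++ y` for some `i ≥ 1` and some prefix `y` of `x`. -/
def IsFactor (x s : Str) : Prop :=
  x ≠ [] ∧ ∃ i : ℕ, 1 ≤ i ∧ ∃ y : Str, y <+: x ∧ s = (List.replicate i x).flatten ++ y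

/-- `period s`: the length of the shortest factor of `s`. -/
noncomputable def periodStr (s : Str) : ℕ :=
  sInf {k | ∃ x : Str, IsFactor x s ∧ x.length = k}

open Classical in
/-- `factorStr s`: a shortest factor of `s`. -/
noncomputable def factorStr (s : Str) : Str :=
  if h : ∃ x : Str, IsFactor x s ∧ x.length = periodStr s then h.choose else []

/-- Two strings are equivalent if the factor of one is a cyclic shift of the factor
of the other. -/
def EquivStr (x y : Str) : Prop :=
  ∃ e f : Str, factorStr x = e ++ f ∧ factorStr y = f ++ e

/-!
For a path `c = [c₁, …, c_r]`, `|⟨c⟩|` is the weight of the cycle `c₁, …, c_r, c₁` plus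
`ov(c_r, c₁)`, while its rotation starting at `c_{j+1}` pays `ov(c_j, c_{j+1})` instead. So it
suffices that the closing overlap `ov(c_r, c₁)` of every closed cycle is at most the overlap of
each of its edges.

An edge was created by merging paths `p, q` of maximal overlap `ov(⟨p⟩, ⟨q⟩)`, which equals
`ov(last p, first q)`; the closing overlap is at most `ov(⟨c⟩, ⟨c⟩)`, maximal at a later time.
Hence everything follows once maximal overlaps never increase. After a merge, an overlap of
`⟨p, q⟩` with another `⟨z⟩` longer than that of `⟨q⟩` with `⟨z⟩` would put `⟨q⟩` inside `⟨z⟩`,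
and a long self-overlap of `⟨p, q⟩` would give `⟨q⟩` a self-overlap above `ov(⟨p⟩, ⟨q⟩)`.
Substring-freeness of the collection, and `ov(⟨z₁⟩, ⟨z₂⟩) ≤ ov(last z₁, first z₂)`, are
preserved by merges by the same kind of argument.
-/

open List

@[simp] lemma DNA.compl_compl (a : DNA) : a.compl.compl = a := by cases a <;> rfl

@[simp] lemma rc_rc (s : Str) : rc (rc s) = s := by
  simp [rc, Function.comp_def]

lemma rc_injective : Function.Injective rc := Function.LeftInverse.injective rc_rc

@[simp] lemma rc_inj {a b : Str} : rc a = rc b ↔ a = b := rc_injective.eq_iff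

@[simp] lemma length_rc (s : Str) : (rc s).length = s.length := by simp [rc]

@[simp] lemma rc_nil : rc [] = [] := rfl

@[simp] lemma rc_eq_nil_iff {s : Str} : rc s = [] ↔ s = [] := by simp [rc]

lemma rc_append (a b : Str) : rc (a ++ b) = rc b ++ rc a := by simp [rc]

lemma List.IsPrefix.rc {a b : Str} (h : a <+: b) : _root_.rc a <:+ _root_.rc b :=
  (h.map _).reverse

lemma List.IsSuffix.rc {a b : Str} (h : a <:+ b) : _root_.rc a <+: _root_.rc b :=
  (h.map _).reverse

lemma List.IsInfix.rc {a b : Str} (h : a <:+: b) : _root_.rc a <:+: _root_.rc b :=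
  (h.map _).reverse

def overlapSet (x y : Str) : Set ℕ :=
  {k | ∃ v : Str, v.length = k ∧ (∃ u : Str, u ≠ [] ∧ x = u ++ v) ∧
        (∃ w : Str, w ≠ [] ∧ y = v ++ w)}

lemma lt_length_left_of_mem_overlapSet {x y : Str} {k : ℕ} (h : k ∈ overlapSet x y) :
    k < x.length := by
  obtain ⟨v, rfl, ⟨u, hu, rfl⟩, -⟩ := h
  simp [length_pos_iff.2 hu]

lemma lt_length_right_of_mem_overlapSet {x y : Str} {k : ℕ} (h : k ∈ overlapSet x y) :
    k < y.length := by
  obtain ⟨v, rfl, -, ⟨w, hw, rfl⟩⟩ := h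
  simp [length_pos_iff.2 hw]

lemma ov_le_length_left (x y : Str) : ov x y ≤ x.length :=
  csSup_le' fun _ hk => (lt_length_left_of_mem_overlapSet hk).le

lemma ov_le_length_right (x y : Str) : ov x y ≤ y.length :=
  csSup_le' fun _ hk => (lt_length_right_of_mem_overlapSet hk).le

lemma le_ov {x y v : Str} (hx : v <:+ x) (hy : v <+: y)
    (hvx : v.length < x.length) (hvy : v.length < y.length) : v.length ≤ ov x y := by
  obtain ⟨u, rfl⟩ := hx
  obtain ⟨w, rfl⟩ := hy
  refine le_csSup ⟨_, fun _ hk => (lt_length_left_of_mem_overlapSet hk).le⟩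
    ⟨v, rfl, ⟨u, ?_, rfl⟩, ⟨w, ?_, rfl⟩⟩ <;> rintro rfl <;> simp_all

lemma ov_spec {x y : Str} (hx : x ≠ []) (hy : y ≠ []) :
    ∃ v : Str, v.length = ov x y ∧ v <:+ x ∧ v <+: y ∧
      v.length < x.length ∧ v.length < y.length := by
  have hmem : ov x y ∈ overlapSet x y :=
    Nat.sSup_mem ⟨0, [], rfl, ⟨x, hx, by simp⟩, ⟨y, hy, by simp⟩⟩
      ⟨_, fun _ hk => (lt_length_left_of_mem_overlapSet hk).le⟩
  obtain ⟨v, hv, ⟨u, hu, hxv⟩, ⟨w, hw, hyv⟩⟩ := hmem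
  refine ⟨v, hv, ⟨u, hxv.symm⟩, ⟨w, hyv.symm⟩, ?_, ?_⟩ <;>
    simp [hxv, hyv, length_pos_iff.2 hu, length_pos_iff.2 hw]

lemma ov_mono {a b x y : Str} (hax : a <:+ x) (hby : b <+: y) (ha : a ≠ []) (hb : b ≠ []) :
    ov a b ≤ ov x y := by
  obtain ⟨v, hv, hva, hvb, hlta, hltb⟩ := ov_spec ha hb
  exact hv ▸ le_ov (hva.trans hax) (hvb.trans hby)
    (hlta.trans_le hax.length_le) (hltb.trans_le hby.length_le)

lemma ov_rc_le (x y : Str) : ov (rc y) (rc x) ≤ ov x y := by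
  rcases eq_or_ne x [] with rfl | hx
  · exact (ov_le_length_right _ _).trans (by simp)
  rcases eq_or_ne y [] with rfl | hy
  · exact (ov_le_length_left _ _).trans (by simp)
  obtain ⟨v, hv, hvy, hvx, hlty, hltx⟩ :=
    ov_spec (rc_eq_nil_iff.not.2 hy) (rc_eq_nil_iff.not.2 hx)
  have := le_ov (rc_rc x ▸ hvx.rc) (rc_rc y ▸ hvy.rc) (by simpa using hltx) (by simpa using hlty)
  simpa [hv] using this

lemma ov_rc (x y : Str) : ov (rc y) (rc x) = ov x y :=
  (ov_rc_le x y).antisymm (by simpa using ov_rc_le (rc y) (rc x))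

lemma drop_ov_prefix (x y : Str) : x.drop (x.length - ov x y) <+: y := by
  rcases eq_or_ne x [] with rfl | hx
  · simp
  rcases eq_or_ne y [] with rfl | hy
  · simp [Nat.le_zero.1 (ov_le_length_right x [])]
  obtain ⟨v, hv, hvx, hvy, -, -⟩ := ov_spec hx hy
  rwa [suffix_iff_eq_drop.1 hvx, hv] at hvy

lemma drop_ov_eq_take_of_prefix {a c s : Str} (h : c <+: s) :
    a.drop (a.length - ov a c) = s.take (ov a c) := by
  have := prefix_iff_eq_take.1 ((drop_ov_prefix a c).trans h)
  rwa [length_drop, Nat.sub_sub_self (ov_le_length_left a c)] at this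

lemma prefStr_append_of_prefix {a c s : Str} (h : c <+: s) :
    prefStr a c ++ s = a ++ s.drop (ov a c) := by
  have htake := drop_ov_eq_take_of_prefix (a := a) h
  set k := ov a c
  conv_rhs => rw [← take_append_drop (a.length - k) a, htake]
  rw [prefStr, append_assoc, take_append_drop]

lemma mergeStr_eq_append_drop (x y : Str) : mergeStr x y = x ++ y.drop (ov x y) :=
  prefStr_append_of_prefix (prefix_refl y)

lemma length_mergeStr_add_ov (x y : Str) :
    (mergeStr x y).length + ov x y = x.length + y.length := by
  have := ov_le_length_right x y
  rw [mergeStr_eq_append_drop, length_append, length_drop]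
  omega

lemma prefix_mergeStr (x y : Str) : x <+: mergeStr x y := by
  rw [mergeStr_eq_append_drop]; exact prefix_append _ _

lemma suffix_mergeStr (x y : Str) : y <:+ mergeStr x y := suffix_append _ _

lemma ov_mergeStr_left_le {x y z : Str} (h : ¬ y <:+: z) :
    ov (mergeStr x y) z ≤ ov y z := by
  rcases eq_or_ne (mergeStr x y) [] with hm | hm
  · exact (ov_le_length_left _ _).trans (by simp [hm])
  rcases eq_or_ne z [] with rfl | hz
  · exact (ov_le_length_right _ _).trans (by simp)
  obtain ⟨v, hv, hvm, hvz, -, hltz⟩ := ov_spec hm hz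
  rcases lt_or_ge v.length y.length with hlt | hge
  · exact hv ▸ le_ov (suffix_of_suffix_length_le hvm (suffix_mergeStr x y) hlt.le) hvz hlt hltz
  · exact absurd ((suffix_of_suffix_length_le (suffix_mergeStr x y) hvm hge).isInfix.trans
      hvz.isInfix) h

lemma ov_mergeStr_right_le {x y z : Str} (h : ¬ x <:+: z) :
    ov z (mergeStr x y) ≤ ov z x := by
  rcases eq_or_ne z [] with rfl | hz
  · exact (ov_le_length_left _ _).trans (by simp)
  rcases eq_or_ne (mergeStr x y) [] with hm | hm
  · exact (ov_le_length_right _ _).trans (by simp [hm])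
  obtain ⟨v, hv, hvz, hvm, hltz, -⟩ := ov_spec hz hm
  rcases lt_or_ge v.length x.length with hlt | hge
  · exact hv ▸ le_ov hvz (prefix_of_prefix_length_le hvm (prefix_mergeStr x y) hlt.le) hltz hlt
  · exact absurd ((prefix_of_prefix_length_le (prefix_mergeStr x y) hvm hge).isInfix.trans
      hvz.isInfix) h

/-- The occurrences of `s` at the ends of `v` and of `m` are `|m| - |v|` apart. -/
lemma List.drop_prefix_of_suffix_of_prefix {α : Type*} {s v m : List α} (hsv : s <:+ v)
    (hvm : v <+: m) (hsm : s <:+ m) : s.drop (m.length - v.length) <+: s := by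
  obtain ⟨γ, rfl⟩ := hsv
  obtain ⟨β, rfl⟩ := hvm
  obtain ⟨α', hα'⟩ := hsm
  have hlen : α'.length = γ.length + β.length := by
    have := congrArg length hα'
    simp only [length_append] at this
    omega
  have h := congrArg (drop α'.length) hα'
  rw [drop_left, hlen, append_assoc, drop_length_add_append, drop_append] at h
  simp only [length_append, Nat.add_sub_cancel_left]
  exact ⟨_, h.symm⟩

lemma ov_mergeStr_self_le {x y : Str} (hxy : ¬ x <:+: y) (hyx : ¬ y <:+: x)
    (hyy : ov y y ≤ ov x y) : ov (mergeStr x y) (mergeStr x y) ≤ ov y x := by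
  set m := mergeStr x y
  have hy : y ≠ [] := by rintro rfl; exact hyx nil_infix
  have hm : m ≠ [] := fun h => hy (suffix_nil.1 (h ▸ suffix_mergeStr x y))
  obtain ⟨v, hv, hvm, hvm', hltm, -⟩ := ov_spec hm hm
  rcases lt_or_ge v.length y.length with hvy | hvy
  · rcases lt_or_ge v.length x.length with hvx | hvx
    · exact hv ▸ le_ov (suffix_of_suffix_length_le hvm (suffix_mergeStr x y) hvy.le)
        (prefix_of_prefix_length_le hvm' (prefix_mergeStr x y) hvx.le) hvy hvx
    · exact absurd ((prefix_of_prefix_length_le (prefix_mergeStr x y) hvm' hvx).isInfix.trans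
        (suffix_of_suffix_length_le hvm (suffix_mergeStr x y) hvy.le).isInfix) hxy
  rcases le_or_gt v.length x.length with hvx | hvx
  · exact absurd ((suffix_of_suffix_length_le (suffix_mergeStr x y) hvm hvy).isInfix.trans
      (prefix_of_prefix_length_le hvm' (prefix_mergeStr x y) hvx).isInfix) hyx
  -- The two occurrences of `y` in `m` give `y` a self-overlap larger than `ov x y`.
  exfalso
  have hborder := drop_prefix_of_suffix_of_prefix
    (suffix_of_suffix_length_le (suffix_mergeStr x y) hvm hvy) hvm' (suffix_mergeStr x y)
  have hlen : m.length + ov x y = x.length + y.length := length_mergeStr_add_ov x y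
  have hlt : (y.drop (m.length - v.length)).length < y.length := by
    simp only [length_drop]; have := length_pos_iff.2 hy; omega
  have := le_ov (drop_suffix _ y) hborder hlt hlt
  simp only [length_drop] at this
  omega

lemma not_infix_mergeStr {x y z : Str} (hzx : ¬ z <:+: x) (hzy : ¬ z <:+: y)
    (hxz : ¬ x <:+: z) (hov : ov x z ≤ ov x y) : ¬ z <:+: mergeStr x y := by
  set t := ov x y
  have hx : x = prefStr x y ++ y.take t := by
    rw [← drop_ov_eq_take_of_prefix (prefix_refl y), prefStr, take_append_drop]
  have ht : t ≤ y.length := ov_le_length_right x y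
  rw [mergeStr, infix_append_iff_ne_nil]
  rintro (h | h | ⟨l₁, l₂, hl₁, hl₂, rfl, hl₁x, hl₂y⟩)
  · exact hzx (h.trans (take_prefix _ x).isInfix)
  · exact hzy h
  have hw : l₁ ++ y.take t <:+ x := by
    obtain ⟨u, hu⟩ := hl₁x
    exact ⟨u, by rw [hx, ← hu, append_assoc]⟩
  rcases le_or_gt l₂.length t with hl₂t | hl₂t
  · -- `z` lies inside `x`
    have : l₂ <+: y.take t := prefix_of_prefix_length_le hl₂y (take_prefix t y) (by simp; omega)
    exact hzx (((prefix_append_right_inj l₁).2 this).isInfix.trans hw.isInfix)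
  · -- the overlap of `x` with `z` would exceed `t`
    have hct : y.take t <+: l₂ := prefix_of_prefix_length_le (take_prefix t y) hl₂y (by simp; omega)
    have hwz : l₁ ++ y.take t <+: l₁ ++ l₂ := (prefix_append_right_inj l₁).2 hct
    rcases hw.length_le.lt_or_eq with hwx | hwx
    · have hle := le_ov hw hwz hwx (by simp; omega)
      have := length_pos_iff.2 hl₁
      simp only [length_append, length_take] at hle
      omega
    · exact hxz (hw.eq_of_length hwx ▸ hwz.isInfix)

lemma take_rc (u : Str) (k : ℕ) : (rc u).take (u.length - k) = rc (u.drop k) := by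
  conv_lhs => rw [← take_append_drop k u, rc_append]
  exact take_left' (by simp)

namespace List

variable {α : Type*} [Inhabited α]

lemma singleton_head!_prefix {l : List α} (h : l ≠ []) : [l.head!] <+: l := by
  cases l with
  | nil => exact absurd rfl h
  | cons a l => exact ⟨l, rfl⟩

lemma getLast!_append_of_ne_nil (l₁ : List α) {l₂ : List α} (h : l₂ ≠ []) :
    (l₁ ++ l₂).getLast! = l₂.getLast! := by
  simp [getLast?_append, getLast?_eq_some_getLast h]

lemma singleton_getLast!_suffix {l : List α} (h : l ≠ []) : [l.getLast!] <:+ l := by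
  refine ⟨l.dropLast, ?_⟩
  conv_rhs => rw [← dropLast_append_getLast h]
  simp [getLast?_eq_some_getLast h]

lemma getLast!_mem {l : List α} (h : l ≠ []) : l.getLast! ∈ l :=
  (singleton_getLast!_suffix h).subset (mem_singleton_self _)

lemma pair_infix_append_cases {l₁ l₂ : List α} {a b : α} (h : [a, b] <:+: l₁ ++ l₂) :
    [a, b] <:+: l₁ ∨ [a, b] <:+: l₂ ∨ (a = l₁.getLast! ∧ b = l₂.head!) := by
  rcases infix_append_iff_ne_nil.1 h with h | h | ⟨u, w, hu, hw, huw, hu₁, hw₂⟩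
  · exact .inl h
  · exact .inr (.inl h)
  obtain ⟨rfl, rfl⟩ : u = [a] ∧ w = [b] := by
    rcases u with _ | ⟨a', _ | ⟨c, u⟩⟩
    · exact absurd rfl hu
    · simp_all
    · simp_all
  obtain ⟨u', rfl⟩ := hu₁
  obtain ⟨w', rfl⟩ := hw₂
  exact .inr (.inr ⟨(getLast!_append_of_ne_nil u' (cons_ne_nil a [])).symm, rfl⟩)

lemma pair_getLast!_head!_infix_append {l₁ l₂ : List α} (h₁ : l₁ ≠ []) (h₂ : l₂ ≠ []) :
    [l₁.getLast!, l₂.head!] <:+: l₁ ++ l₂ :=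
  infix_append_iff.2 (.inr (.inr ⟨_, _, rfl, singleton_getLast!_suffix h₁,
    singleton_head!_prefix h₂⟩))

end List

@[simp] lemma rcPath_rcPath (z : List Str) : rcPath (rcPath z) = z := by
  simp [rcPath, Function.comp_def]

lemma rcPath_injective : Function.Injective rcPath :=
  Function.LeftInverse.injective rcPath_rcPath

@[simp] lemma rcPath_inj {z₁ z₂ : List Str} : rcPath z₁ = rcPath z₂ ↔ z₁ = z₂ :=
  rcPath_injective.eq_iff

lemma rcPath_eq_iff_eq_rcPath {z₁ z₂ : List Str} : rcPath z₁ = z₂ ↔ z₁ = rcPath z₂ := by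
  rw [← rcPath_inj, rcPath_rcPath]

@[simp] lemma rcPath_eq_nil_iff {z : List Str} : rcPath z = [] ↔ z = [] := by simp [rcPath]

lemma rcPath_append (z₁ z₂ : List Str) : rcPath (z₁ ++ z₂) = rcPath z₂ ++ rcPath z₁ := by
  simp [rcPath]

@[simp] lemma mem_rcPath {a : Str} {z : List Str} : a ∈ rcPath z ↔ rc a ∈ z := by
  simp only [rcPath, mem_reverse, mem_map]
  exact ⟨by rintro ⟨b, hb, rfl⟩; rwa [rc_rc], fun h => ⟨rc a, h, rc_rc a⟩⟩

lemma head!_rcPath (z : List Str) : (rcPath z).head! = rc z.getLast! := by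
  cases h : z.getLast?
  · simp [rcPath, head!_eq_head?_getD, h]; rfl
  · simp [rcPath, head!_eq_head?_getD, h]

lemma getLast!_rcPath (z : List Str) : (rcPath z).getLast! = rc z.head! := by
  simpa using congrArg rc (head!_rcPath (rcPath z)).symm

lemma List.IsInfix.rcPath_edge {z : List Str} {a b : Str} (h : [a, b] <:+: z) :
    [_root_.rc b, _root_.rc a] <:+: _root_.rcPath z :=
  (h.map _root_.rc).reverse

lemma superstr_cons {a : Str} {z : List Str} (h : z ≠ []) :
    superstr (a :: z) = prefStr a z.head! ++ superstr z := by
  cases z with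
  | nil => exact absurd rfl h
  | cons b z => rfl

lemma head!_prefix_superstr (z : List Str) : z.head! <+: superstr z := by
  induction z with
  | nil => exact nil_prefix
  | cons a z ih =>
    rcases eq_or_ne z [] with rfl | hz
    · simp [superstr]
    rw [superstr_cons hz, head!_cons, prefStr_append_of_prefix ih]
    exact prefix_append _ _

lemma getLast!_suffix_superstr (z : List Str) : z.getLast! <:+ superstr z := by
  induction z with
  | nil => exact nil_suffix
  | cons a z ih =>
    rcases eq_or_ne z [] with rfl | hz
    · simp [superstr]
    rw [superstr_cons hz, ← singleton_append, getLast!_append_of_ne_nil _ hz]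
    exact ih.trans (suffix_append _ _)

lemma superstr_append {z₁ z₂ : List Str} (h₁ : z₁ ≠ []) (h₂ : z₂ ≠ []) :
    superstr (z₁ ++ z₂) = (superstr z₁).take ((superstr z₁).length -
      ov z₁.getLast! z₂.head!) ++ superstr z₂ := by
  induction z₁ with
  | nil => exact absurd rfl h₁
  | cons a l ih =>
    rcases eq_or_ne l [] with rfl | hl
    · rw [singleton_append, superstr_cons h₂]; rfl
    have hk : ov l.getLast! z₂.head! ≤ (superstr l).length :=
      (ov_le_length_left _ _).trans (getLast!_suffix_superstr l).length_le
    rw [cons_append, superstr_cons (append_ne_nil_of_left_ne_nil hl _), head!_append _ hl,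
      ih hl, superstr_cons hl, ← singleton_append, getLast!_append_of_ne_nil _ hl, length_append,
      Nat.add_sub_assoc hk, take_length_add_append, append_assoc]

lemma length_superstr_append {z₁ z₂ : List Str} (h₁ : z₁ ≠ []) (h₂ : z₂ ≠ []) :
    (superstr (z₁ ++ z₂)).length + ov z₁.getLast! z₂.head! =
      (superstr z₁).length + (superstr z₂).length := by
  have hk : ov z₁.getLast! z₂.head! ≤ (superstr z₁).length :=
    (ov_le_length_left _ _).trans (getLast!_suffix_superstr z₁).length_le
  rw [superstr_append h₁ h₂, length_append, length_take]
  omega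

lemma superstr_rcPath (z : List Str) : superstr (rcPath z) = rc (superstr z) := by
  induction z with
  | nil => rfl
  | cons a l ih =>
    rcases eq_or_ne l [] with rfl | hl
    · rfl
    have hrc : rcPath (a :: l) = rcPath l ++ [rc a] := rcPath_append [a] l
    rw [hrc, superstr_append (rcPath_eq_nil_iff.not.2 hl) (cons_ne_nil _ _), ih,
      getLast!_rcPath, head!_cons, ov_rc, length_rc, take_rc, superstr_cons hl,
      prefStr_append_of_prefix (head!_prefix_superstr l), rc_append]
    rfl

def MemRC (P : Finset (List Str)) (z : List Str) : Prop := z ∈ P ∨ rcPath z ∈ P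

lemma MemRC.rcPath {P : Finset (List Str)} {z : List Str} (h : MemRC P z) :
    MemRC P (_root_.rcPath z) := by
  rw [MemRC, rcPath_rcPath]; exact h.symm

lemma MemRC.mono {P P' : Finset (List Str)} (hP : P ⊆ P') {z : List Str} (h : MemRC P z) :
    MemRC P' z :=
  h.imp (@hP _) (@hP _)

lemma ValidPairP.mono {P P' : Finset (List Str)} (hP : P ⊆ P') {z₁ z₂ : List Str}
    (h : ValidPairP P z₁ z₂) : ValidPairP P' z₁ z₂ :=
  ⟨MemRC.mono hP h.1, MemRC.mono hP h.2.1, h.2.2⟩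

structure GreedyInv (S : Finset Str) (P : Finset (List Str)) : Prop where
  ne_nil : ∀ z, MemRC P z → z ≠ []
  vertex : ∀ z, MemRC P z → ∀ a ∈ z, (a ∈ S ∨ rc a ∈ S) ∧ a ≠ []
  eq_of_common_vertex : ∀ z₁ z₂, MemRC P z₁ → MemRC P z₂ → ∀ a ∈ z₁, ∀ b ∈ z₂,
    (a = b ∨ a = rc b) → z₁ = z₂ ∨ z₁ = rcPath z₂
  ov_le_ov_ends : ∀ z₁ z₂, MemRC P z₁ → MemRC P z₂ → rc (superstr z₁) ≠ superstr z₂ →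
    ov (superstr z₁) (superstr z₂) ≤ ov z₁.getLast! z₂.head!
  not_infix : ∀ z₁ z₂, MemRC P z₁ → MemRC P z₂ → z₁ ≠ z₂ → z₁ ≠ rcPath z₂ →
    ¬ superstr z₁ <:+: superstr z₂
  ov_le_edge : ∀ z, MemRC P z → ∀ a b, [a, b] <:+: z → ∀ z₁ z₂, ValidPairP P z₁ z₂ →
    ov (superstr z₁) (superstr z₂) ≤ ov a b

lemma eq_of_prefix_of_substrFree {S : Finset Str} (hS : SubstrFree S) {a b w : Str}
    (ha : a ∈ S ∨ rc a ∈ S) (hb : b ∈ S ∨ rc b ∈ S) (haw : a <+: w) (hbw : b <+: w) :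
    a = b := by
  by_contra hab
  rcases le_total a.length b.length with hl | hl
  · exact hS a ha b hb hab (prefix_of_prefix_length_le haw hbw hl).isInfix
  · exact hS b hb a ha (Ne.symm hab) (prefix_of_prefix_length_le hbw haw hl).isInfix

namespace GreedyInv

variable {S : Finset Str} {P : Finset (List Str)} {z z₁ z₂ : List Str}

lemma head!_ne_nil (H : GreedyInv S P) (h : MemRC P z) : z.head! ≠ [] :=
  (H.vertex z h _ (head!_mem_self (H.ne_nil z h))).2

lemma getLast!_ne_nil (H : GreedyInv S P) (h : MemRC P z) : z.getLast! ≠ [] :=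
  (H.vertex z h _ (getLast!_mem (H.ne_nil z h))).2

lemma eq_of_superstr_eq (hS : SubstrFree S) (H : GreedyInv S P) (h₁ : MemRC P z₁)
    (h₂ : MemRC P z₂) (he : superstr z₁ = superstr z₂) : z₁ = z₂ ∨ z₁ = rcPath z₂ := by
  have hz₁ := H.ne_nil z₁ h₁
  have hz₂ := H.ne_nil z₂ h₂
  refine H.eq_of_common_vertex z₁ z₂ h₁ h₂ _ (head!_mem_self hz₁) _ (head!_mem_self hz₂)
    (.inl (eq_of_prefix_of_substrFree hS (H.vertex z₁ h₁ _ (head!_mem_self hz₁)).1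
      (H.vertex z₂ h₂ _ (head!_mem_self hz₂)).1 ?_ (head!_prefix_superstr z₂)))
  exact he ▸ head!_prefix_superstr z₁

lemma rc_superstr_ne (hS : SubstrFree S) (H : GreedyInv S P) (h₁ : MemRC P z₁)
    (h₂ : MemRC P z₂) (hne : z₁ ≠ z₂) (hne' : z₁ ≠ rcPath z₂) :
    rc (superstr z₁) ≠ superstr z₂ := by
  rw [← superstr_rcPath]
  intro he
  rcases H.eq_of_superstr_eq hS h₁.rcPath h₂ he with h | h
  · exact hne' (rcPath_eq_iff_eq_rcPath.1 h)
  · exact hne (by simpa using h)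

lemma validPairP_of_ne (hS : SubstrFree S) (H : GreedyInv S P) (h₁ : MemRC P z₁)
    (h₂ : MemRC P z₂) (hne : z₁ ≠ z₂) (hne' : z₁ ≠ rcPath z₂) : ValidPairP P z₁ z₂ :=
  ⟨h₁, h₂, .inr ⟨fun he => (H.eq_of_superstr_eq hS h₁ h₂ he).elim hne hne',
    H.rc_superstr_ne hS h₁ h₂ hne hne'⟩⟩

lemma mono {P' : Finset (List Str)} (hP : P' ⊆ P) (H : GreedyInv S P) : GreedyInv S P' where
  ne_nil z h := H.ne_nil z (h.mono hP)
  vertex z h := H.vertex z (h.mono hP)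
  eq_of_common_vertex z₁ z₂ h₁ h₂ := H.eq_of_common_vertex z₁ z₂ (h₁.mono hP) (h₂.mono hP)
  ov_le_ov_ends z₁ z₂ h₁ h₂ := H.ov_le_ov_ends z₁ z₂ (h₁.mono hP) (h₂.mono hP)
  not_infix z₁ z₂ h₁ h₂ := H.not_infix z₁ z₂ (h₁.mono hP) (h₂.mono hP)
  ov_le_edge z h a b hab z₁ z₂ hv := H.ov_le_edge z (h.mono hP) a b hab z₁ z₂ (hv.mono hP)

end GreedyInv

lemma memRC_image_singleton {S : Finset Str} {z : List Str}
    (h : MemRC (S.image fun s => [s]) z) : ∃ a, (a ∈ S ∨ rc a ∈ S) ∧ z = [a] := by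
  rcases h with h | h <;> obtain ⟨s, hs, he⟩ := Finset.mem_image.1 h
  · exact ⟨s, .inl hs, he.symm⟩
  · exact ⟨rc s, .inr (by rwa [rc_rc]), by rw [rcPath_eq_iff_eq_rcPath.1 he.symm]; rfl⟩

lemma greedyInv_image_singleton {S : Finset Str} (hS : SubstrFree S) (hnil : [] ∉ S) :
    GreedyInv S (S.image fun s => [s]) where
  ne_nil z h := by
    obtain ⟨a, -, rfl⟩ := memRC_image_singleton h
    exact cons_ne_nil a []
  vertex z h := by
    obtain ⟨a, ha, rfl⟩ := memRC_image_singleton h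
    simp only [mem_singleton, forall_eq]
    refine ⟨ha, ?_⟩
    rintro rfl
    exact hnil (by simpa using ha)
  eq_of_common_vertex z₁ z₂ h₁ h₂ := by
    obtain ⟨a, -, rfl⟩ := memRC_image_singleton h₁
    obtain ⟨b, -, rfl⟩ := memRC_image_singleton h₂
    simp only [mem_singleton, forall_eq]
    rintro (rfl | rfl) <;> simp [rcPath]
  ov_le_ov_ends z₁ z₂ h₁ h₂ _ := by
    obtain ⟨a, -, rfl⟩ := memRC_image_singleton h₁
    obtain ⟨b, -, rfl⟩ := memRC_image_singleton h₂
    exact le_rfl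
  not_infix z₁ z₂ h₁ h₂ hne _ := by
    obtain ⟨a, ha, rfl⟩ := memRC_image_singleton h₁
    obtain ⟨b, hb, rfl⟩ := memRC_image_singleton h₂
    exact hS a ha b hb (by rintro rfl; exact hne rfl)
  ov_le_edge z h a b hab := by
    obtain ⟨c, -, rfl⟩ := memRC_image_singleton h
    simpa using hab.length_le

def mergeColl (P : Finset (List Str)) (p q : List Str) : Finset (List Str) :=
  insert (p ++ q) (P \ {p, rcPath p, q, rcPath q})

def Untouched (P : Finset (List Str)) (p q z : List Str) : Prop :=
  MemRC P z ∧ z ≠ p ∧ z ≠ rcPath p ∧ z ≠ q ∧ z ≠ rcPath q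

namespace Untouched

variable {P : Finset (List Str)} {p q z : List Str}

lemma rcPath (h : Untouched P p q z) : Untouched P p q (_root_.rcPath z) := by
  obtain ⟨hz, h₁, h₂, h₃, h₄⟩ := h
  refine ⟨hz.rcPath, ?_, ?_, ?_, ?_⟩ <;>
    simp only [ne_eq, rcPath_eq_iff_eq_rcPath, rcPath_rcPath] <;> assumption

lemma left_ne (h : Untouched P p q z) : p ≠ z := h.2.1.symm

lemma left_ne_rcPath (h : Untouched P p q z) : p ≠ _root_.rcPath z :=
  fun he => h.2.2.1 (rcPath_eq_iff_eq_rcPath.2 he).symm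

lemma right_ne (h : Untouched P p q z) : q ≠ z := h.2.2.2.1.symm

lemma right_ne_rcPath (h : Untouched P p q z) : q ≠ _root_.rcPath z :=
  fun he => h.2.2.2.2 (rcPath_eq_iff_eq_rcPath.2 he).symm

end Untouched

lemma memRC_mergeColl {P : Finset (List Str)} {p q z : List Str}
    (h : MemRC (mergeColl P p q) z) :
    z = p ++ q ∨ z = rcPath (p ++ q) ∨ Untouched P p q z := by
  simp only [MemRC, mergeColl, Finset.mem_insert, Finset.mem_sdiff,
    Finset.mem_singleton, rcPath_eq_iff_eq_rcPath, rcPath_rcPath] at h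
  rcases h with (h | ⟨h, hn⟩) | (h | ⟨h, hn⟩)
  · exact .inl h
  · exact .inr (.inr ⟨.inl h, by tauto⟩)
  · exact .inr (.inl h)
  · exact .inr (.inr ⟨.inr h, by tauto⟩)

/-- The symmetry `(z₁, z₂) ↦ (rcPath z₂, rcPath z₁)` of `Φ` saves three of the nine cases. -/
@[elab_as_elim]
lemma forall_memRC_mergeColl {P : Finset (List Str)} {p q : List Str}
    {Φ : List Str → List Str → Prop} (hΦ : ∀ z₁ z₂, Φ (rcPath z₂) (rcPath z₁) → Φ z₁ z₂)
    (hmm : Φ (p ++ q) (p ++ q)) (hmr : Φ (p ++ q) (rcPath (p ++ q)))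
    (hrm : Φ (rcPath (p ++ q)) (p ++ q)) (hmu : ∀ z, Untouched P p q z → Φ (p ++ q) z)
    (hum : ∀ z, Untouched P p q z → Φ z (p ++ q))
    (huu : ∀ z₁ z₂, Untouched P p q z₁ → Untouched P p q z₂ → Φ z₁ z₂)
    {z₁ z₂ : List Str} (h₁ : MemRC (mergeColl P p q) z₁) (h₂ : MemRC (mergeColl P p q) z₂) :
    Φ z₁ z₂ := by
  rcases memRC_mergeColl h₁ with rfl | rfl | hu₁ <;>
    rcases memRC_mergeColl h₂ with rfl | rfl | hu₂
  · exact hmm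
  · exact hmr
  · exact hmu z₂ hu₂
  · exact hrm
  · exact hΦ _ _ (by simpa using hmm)
  · exact hΦ _ _ (by simpa using hum _ hu₂.rcPath)
  · exact hum z₁ hu₁
  · exact hΦ _ _ (by simpa using hmu _ hu₁.rcPath)
  · exact huu z₁ z₂ hu₁ hu₂

structure GreedyMerge (S : Finset Str) (P : Finset (List Str)) (p q : List Str) : Prop where
  substrFree : SubstrFree S
  inv : GreedyInv S P
  mem_left : MemRC P p
  mem_right : MemRC P q
  superstr_ne : superstr p ≠ superstr q
  rc_superstr_ne : rc (superstr p) ≠ superstr q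
  ov_le : ∀ z₁ z₂, ValidPairP P z₁ z₂ →
    ov (superstr z₁) (superstr z₂) ≤ ov (superstr p) (superstr q)

namespace GreedyMerge

variable {S : Finset Str} {P : Finset (List Str)} {p q z : List Str}

lemma left_ne_nil (M : GreedyMerge S P p q) : p ≠ [] := M.inv.ne_nil p M.mem_left

lemma right_ne_nil (M : GreedyMerge S P p q) : q ≠ [] := M.inv.ne_nil q M.mem_right

lemma left_ne_right (M : GreedyMerge S P p q) : p ≠ q := fun h => M.superstr_ne (h ▸ rfl)

lemma left_ne_rcPath_right (M : GreedyMerge S P p q) : p ≠ rcPath q :=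
  fun h => M.rc_superstr_ne (by rw [h, superstr_rcPath, rc_rc])

lemma right_ne_rcPath_left (M : GreedyMerge S P p q) : q ≠ rcPath p :=
  fun h => M.left_ne_rcPath_right (rcPath_eq_iff_eq_rcPath.1 h.symm)

lemma ov_superstr_eq (M : GreedyMerge S P p q) :
    ov (superstr p) (superstr q) = ov p.getLast! q.head! :=
  (M.inv.ov_le_ov_ends p q M.mem_left M.mem_right M.rc_superstr_ne).antisymm
    (ov_mono (getLast!_suffix_superstr p) (head!_prefix_superstr q)
      (M.inv.getLast!_ne_nil M.mem_left) (M.inv.head!_ne_nil M.mem_right))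

lemma superstr_append_eq (M : GreedyMerge S P p q) :
    superstr (p ++ q) = mergeStr (superstr p) (superstr q) := by
  rw [superstr_append M.left_ne_nil M.right_ne_nil, ← M.ov_superstr_eq]; rfl

lemma not_infix_left_right (M : GreedyMerge S P p q) : ¬ superstr p <:+: superstr q :=
  M.inv.not_infix p q M.mem_left M.mem_right M.left_ne_right M.left_ne_rcPath_right

lemma not_infix_right_left (M : GreedyMerge S P p q) : ¬ superstr q <:+: superstr p :=
  M.inv.not_infix q p M.mem_right M.mem_left M.left_ne_right.symm M.right_ne_rcPath_left

lemma ov_superstr_append_self_le (M : GreedyMerge S P p q) :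
    ov (superstr (p ++ q)) (superstr (p ++ q)) ≤ ov (superstr q) (superstr p) := by
  rw [M.superstr_append_eq]
  exact ov_mergeStr_self_le M.not_infix_left_right M.not_infix_right_left
    (M.ov_le q q ⟨M.mem_right, M.mem_right, .inl rfl⟩)

lemma ov_superstr_append_left_le (M : GreedyMerge S P p q) (hz : Untouched P p q z) :
    ov (superstr (p ++ q)) (superstr z) ≤ ov (superstr q) (superstr z) := by
  rw [M.superstr_append_eq]
  exact ov_mergeStr_left_le
    (M.inv.not_infix q z M.mem_right hz.1 hz.right_ne hz.right_ne_rcPath)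

lemma ov_superstr_append_right_le (M : GreedyMerge S P p q) (hz : Untouched P p q z) :
    ov (superstr z) (superstr (p ++ q)) ≤ ov (superstr z) (superstr p) := by
  rw [M.superstr_append_eq]
  exact ov_mergeStr_right_le
    (M.inv.not_infix p z M.mem_left hz.1 hz.left_ne hz.left_ne_rcPath)

lemma superstr_append_not_infix_untouched (M : GreedyMerge S P p q) (hz : Untouched P p q z) :
    ¬ superstr (p ++ q) <:+: superstr z := fun h =>
  M.inv.not_infix p z M.mem_left hz.1 hz.left_ne hz.left_ne_rcPath
    ((M.superstr_append_eq ▸ prefix_mergeStr _ _).isInfix.trans h)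

lemma untouched_not_infix_superstr_append (M : GreedyMerge S P p q) (hz : Untouched P p q z) :
    ¬ superstr z <:+: superstr (p ++ q) := by
  rw [M.superstr_append_eq]
  exact not_infix_mergeStr (M.inv.not_infix z p hz.1 M.mem_left hz.2.1 hz.2.2.1)
    (M.inv.not_infix z q hz.1 M.mem_right hz.2.2.2.1 hz.2.2.2.2)
    (M.inv.not_infix p z M.mem_left hz.1 hz.left_ne hz.left_ne_rcPath)
    (M.ov_le p z (M.inv.validPairP_of_ne M.substrFree M.mem_left hz.1 hz.left_ne
      hz.left_ne_rcPath))

lemma superstr_append_ne_rc (M : GreedyMerge S P p q) :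
    superstr (p ++ q) ≠ rc (superstr (p ++ q)) := by
  -- Otherwise `first p` and `rc (last q)` would both be prefixes of `⟨p, q⟩`.
  intro he
  have hp := M.inv.vertex p M.mem_left _ (head!_mem_self M.left_ne_nil)
  have hq := M.inv.vertex q M.mem_right _ (getLast!_mem M.right_ne_nil)
  have hpre := head!_prefix_superstr (rcPath (p ++ q))
  rw [superstr_rcPath, ← he, head!_rcPath, getLast!_append_of_ne_nil _ M.right_ne_nil] at hpre
  have hhead := head!_prefix_superstr (p ++ q)
  rw [head!_append _ M.left_ne_nil] at hhead
  have := eq_of_prefix_of_substrFree M.substrFree hp.1 (by simpa [or_comm] using hq.1) hhead hpre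
  rcases M.inv.eq_of_common_vertex p q M.mem_left M.mem_right _ (head!_mem_self M.left_ne_nil)
    _ (getLast!_mem M.right_ne_nil) (.inr this) with h | h
  · exact M.left_ne_right h
  · exact M.left_ne_rcPath_right h

lemma validPairP (M : GreedyMerge S P p q) : ValidPairP P p q :=
  ⟨M.mem_left, M.mem_right, .inr ⟨M.superstr_ne, M.rc_superstr_ne⟩⟩

lemma ov_le_of_validPairP (M : GreedyMerge S P p q) {z₁ z₂ : List Str}
    (hv : ValidPairP (mergeColl P p q) z₁ z₂) :
    ov (superstr z₁) (superstr z₂) ≤ ov (superstr p) (superstr q) := by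
  obtain ⟨h₁, h₂, hc⟩ := hv
  revert hc
  refine forall_memRC_mergeColl (Φ := fun z₁ z₂ => superstr z₁ = superstr z₂ ∨
      (superstr z₁ ≠ superstr z₂ ∧ rc (superstr z₁) ≠ superstr z₂) →
      ov (superstr z₁) (superstr z₂) ≤ ov (superstr p) (superstr q))
    ?_ ?_ ?_ ?_ ?_ ?_ ?_ h₁ h₂
  · intro z₁ z₂ h hc
    simp only [superstr_rcPath, rc_rc, ne_eq, rc_inj, ov_rc] at h
    exact h (hc.imp Eq.symm fun hc => ⟨hc.1.symm, hc.2.symm⟩)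
  · exact fun _ => M.ov_superstr_append_self_le.trans (M.ov_le q p
      (M.inv.validPairP_of_ne M.substrFree M.mem_right M.mem_left M.left_ne_right.symm
        M.right_ne_rcPath_left))
  · rw [superstr_rcPath]
    exact fun hc => hc.elim (absurd · M.superstr_append_ne_rc) (absurd rfl ·.2)
  · rw [superstr_rcPath]
    exact fun hc => hc.elim (absurd ·.symm M.superstr_append_ne_rc) (absurd (rc_rc _) ·.2)
  · exact fun z hz _ => (M.ov_superstr_append_left_le hz).trans (M.ov_le q z
      (M.inv.validPairP_of_ne M.substrFree M.mem_right hz.1 hz.right_ne hz.right_ne_rcPath))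
  · exact fun z hz _ => (M.ov_superstr_append_right_le hz).trans (M.ov_le z p
      (M.inv.validPairP_of_ne M.substrFree hz.1 M.mem_left hz.2.1 hz.2.2.1))
  · exact fun z₁ z₂ hu₁ hu₂ hc => M.ov_le z₁ z₂ ⟨hu₁.1, hu₂.1, hc⟩

lemma ov_le_ov_ends_mergeColl (M : GreedyMerge S P p q) {z₁ z₂ : List Str}
    (h₁ : MemRC (mergeColl P p q) z₁) (h₂ : MemRC (mergeColl P p q) z₂) :
    rc (superstr z₁) ≠ superstr z₂ →
      ov (superstr z₁) (superstr z₂) ≤ ov z₁.getLast! z₂.head! := by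
  refine forall_memRC_mergeColl ?_ ?_ ?_ ?_ ?_ ?_ ?_ h₁ h₂
  · intro z₁ z₂ h hc
    simp only [superstr_rcPath, getLast!_rcPath, head!_rcPath, ov_rc, rc_rc] at h
    exact h (fun he => hc he.symm)
  · intro _
    rw [getLast!_append_of_ne_nil _ M.right_ne_nil, head!_append _ M.left_ne_nil]
    exact M.ov_superstr_append_self_le.trans (M.inv.ov_le_ov_ends q p M.mem_right M.mem_left
      (M.inv.rc_superstr_ne M.substrFree M.mem_right M.mem_left M.left_ne_right.symm
        M.right_ne_rcPath_left))
  · exact fun hc => absurd (superstr_rcPath _).symm hc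
  · exact fun hc => absurd (by rw [superstr_rcPath, rc_rc]) hc
  · intro z hz _
    rw [getLast!_append_of_ne_nil _ M.right_ne_nil]
    exact (M.ov_superstr_append_left_le hz).trans (M.inv.ov_le_ov_ends q z M.mem_right hz.1
      (M.inv.rc_superstr_ne M.substrFree M.mem_right hz.1 hz.right_ne hz.right_ne_rcPath))
  · intro z hz _
    rw [head!_append _ M.left_ne_nil]
    exact (M.ov_superstr_append_right_le hz).trans (M.inv.ov_le_ov_ends z p hz.1 M.mem_left
      (M.inv.rc_superstr_ne M.substrFree hz.1 M.mem_left hz.2.1 hz.2.2.1))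
  · exact fun z₁ z₂ hu₁ hu₂ => M.inv.ov_le_ov_ends z₁ z₂ hu₁.1 hu₂.1

lemma not_infix_mergeColl (M : GreedyMerge S P p q) {z₁ z₂ : List Str}
    (h₁ : MemRC (mergeColl P p q) z₁) (h₂ : MemRC (mergeColl P p q) z₂)
    (hne : z₁ ≠ z₂) (hne' : z₁ ≠ rcPath z₂) : ¬ superstr z₁ <:+: superstr z₂ := by
  rcases memRC_mergeColl h₁ with rfl | rfl | hu₁ <;>
    rcases memRC_mergeColl h₂ with rfl | rfl | hu₂
  · exact absurd rfl hne
  · exact absurd (rcPath_rcPath _).symm hne'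
  · exact M.superstr_append_not_infix_untouched hu₂
  · exact absurd rfl hne'
  · exact absurd rfl hne
  · exact fun h => M.superstr_append_not_infix_untouched hu₂.rcPath
      (by simpa [superstr_rcPath] using h.rc)
  · exact M.untouched_not_infix_superstr_append hu₁
  · exact fun h => M.untouched_not_infix_superstr_append hu₁.rcPath
      (by simpa [superstr_rcPath] using h.rc)
  · exact M.inv.not_infix _ _ hu₁.1 hu₂.1 hne hne'

lemma eq_of_common_vertex_mergeColl (M : GreedyMerge S P p q) {z₁ z₂ : List Str}
    (h₁ : MemRC (mergeColl P p q) z₁) (h₂ : MemRC (mergeColl P p q) z₂) :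
    ∀ a ∈ z₁, ∀ b ∈ z₂, (a = b ∨ a = rc b) → z₁ = z₂ ∨ z₁ = rcPath z₂ := by
  refine forall_memRC_mergeColl ?_ ?_ ?_ ?_ ?_ ?_ ?_ h₁ h₂
  · intro z₁ z₂ h a ha b hb hab
    have := h (rc b) (by simpa using hb) (rc a) (by simpa using ha)
      (hab.imp (fun he => by rw [he]) (fun he => by rw [he, rc_rc]))
    simpa [rcPath_eq_iff_eq_rcPath, eq_comm] using this
  · exact fun _ _ _ _ _ => .inl rfl
  · exact fun _ _ _ _ _ => .inr (rcPath_rcPath _).symm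
  · exact fun _ _ _ _ _ => .inr rfl
  · intro z hz a ha b hb hab
    rcases mem_append.1 ha with ha | ha
    · exact (M.inv.eq_of_common_vertex p z M.mem_left hz.1 a ha b hb hab).elim
        (absurd · hz.left_ne) (absurd · hz.left_ne_rcPath)
    · exact (M.inv.eq_of_common_vertex q z M.mem_right hz.1 a ha b hb hab).elim
        (absurd · hz.right_ne) (absurd · hz.right_ne_rcPath)
  · intro z hz a ha b hb hab
    rcases mem_append.1 hb with hb | hb
    · exact (M.inv.eq_of_common_vertex z p hz.1 M.mem_left a ha b hb hab).elim
        (absurd · hz.2.1) (absurd · hz.2.2.1)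
    · exact (M.inv.eq_of_common_vertex z q hz.1 M.mem_right a ha b hb hab).elim
        (absurd · hz.2.2.2.1) (absurd · hz.2.2.2.2)
  · exact fun z₁ z₂ hu₁ hu₂ => M.inv.eq_of_common_vertex z₁ z₂ hu₁.1 hu₂.1

lemma ov_le_edge_append (M : GreedyMerge S P p q) {a b : Str} (h : [a, b] <:+: p ++ q) :
    ov (superstr p) (superstr q) ≤ ov a b := by
  rcases pair_infix_append_cases h with h | h | ⟨rfl, rfl⟩
  · exact M.inv.ov_le_edge p M.mem_left a b h p q M.validPairP
  · exact M.inv.ov_le_edge q M.mem_right a b h p q M.validPairP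
  · exact M.ov_superstr_eq.le

lemma greedyInv_mergeColl (M : GreedyMerge S P p q) : GreedyInv S (mergeColl P p q) where
  ne_nil z hz := by
    rcases memRC_mergeColl hz with rfl | rfl | hu
    · exact append_ne_nil_of_left_ne_nil M.left_ne_nil q
    · simpa using append_ne_nil_of_left_ne_nil M.left_ne_nil q
    · exact M.inv.ne_nil z hu.1
  vertex z hz a ha := by
    have hm : ∀ a ∈ p ++ q, (a ∈ S ∨ rc a ∈ S) ∧ a ≠ [] := fun a ha =>
      (mem_append.1 ha).elim (M.inv.vertex p M.mem_left a) (M.inv.vertex q M.mem_right a)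
    rcases memRC_mergeColl hz with rfl | rfl | hu
    · exact hm a ha
    · simpa [or_comm] using hm (rc a) (mem_rcPath.1 ha)
    · exact M.inv.vertex z hu.1 a ha
  eq_of_common_vertex _ _ := M.eq_of_common_vertex_mergeColl
  ov_le_ov_ends _ _ := M.ov_le_ov_ends_mergeColl
  not_infix _ _ := M.not_infix_mergeColl
  ov_le_edge z hz a b hab z₁ z₂ hv := (M.ov_le_of_validPairP hv).trans <| by
    rcases memRC_mergeColl hz with rfl | rfl | hu
    · exact M.ov_le_edge_append hab
    · have := M.ov_le_edge_append (a := rc b) (b := rc a) (by simpa using hab.rcPath_edge)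
      rwa [ov_rc] at this
    · exact M.inv.ov_le_edge z hu.1 a b hab p q M.validPairP

end GreedyMerge

lemma length_superstr_le_rotate_of_ov_le {c : List Str} {j : ℕ} (hj : 0 < j) (hjc : j < c.length)
    (h : ov c.getLast! c.head! ≤ ov (c.take j).getLast! (c.drop j).head!) :
    (superstr c).length ≤ (superstr (c.rotate j)).length := by
  have ht : c.take j ≠ [] := ne_nil_of_length_pos (by simp; omega)
  have hd : c.drop j ≠ [] := ne_nil_of_length_pos (by simp; omega)
  have h₁ := length_superstr_append ht hd
  have h₂ := length_superstr_append hd ht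
  rw [take_append_drop] at h₁
  rw [← rotate_eq_drop_append_take hjc.le] at h₂
  conv at h =>
    lhs
    rw [← take_append_drop j c, getLast!_append_of_ne_nil _ hd, head!_append _ ht]
  omega

lemma MGreedyCyc.length_superstr_le_rotate {S : Finset Str} (hS : SubstrFree S)
    {P C : Finset (List Str)} (hex : MGreedyCyc P C) (H : GreedyInv S P) {c : List Str}
    (hc : c ∈ C) {j : ℕ} (hj : 0 < j) (hjc : j ≤ c.length) :
    (superstr c).length ≤ (superstr (c.rotate j)).length := by
  induction hex with
  | done => simp at hc
  | close P C p hp _ _ ih =>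
    rcases Finset.mem_insert.1 hc with rfl | hc
    · rcases hjc.eq_or_lt with rfl | hjc
      · rw [rotate_length]
      have hedge := take_append_drop j c ▸ pair_getLast!_head!_infix_append
        (l₁ := c.take j) (l₂ := c.drop j) (ne_nil_of_length_pos (by simp; omega))
        (ne_nil_of_length_pos (by simp; omega))
      -- The closing overlap is at most the self-overlap of `⟨c⟩`, which was maximal.
      refine length_superstr_le_rotate_of_ov_le hj hjc ((ov_mono (getLast!_suffix_superstr c)
        (head!_prefix_superstr c) (H.getLast!_ne_nil hp) (H.head!_ne_nil hp)).trans ?_)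
      exact H.ov_le_edge c hp _ _ hedge c c ⟨hp, hp, .inl rfl⟩
    · exact ih (H.mono Finset.sdiff_subset) hc
  | merge P C p q hp hq hne hrc hmax _ ih =>
    exact ih (GreedyMerge.greedyInv_mergeColl ⟨hS, H, hp, hq, hne, hrc, hmax⟩) hc

lemma MGreedyCyc.subset_singleton {P C : Finset (List Str)} (hex : MGreedyCyc P C)
    {a : Str} (ha : rc a = a) (hP : P ⊆ {[a]}) : C ⊆ {[a]} := by
  have hmem : ∀ {P : Finset (List Str)}, P ⊆ {[a]} → ∀ {z}, MemRC P z → z = [a] := by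
    rintro P hP z (hz | hz)
    · exact Finset.mem_singleton.1 (hP hz)
    · rw [rcPath_eq_iff_eq_rcPath.1 (Finset.mem_singleton.1 (hP hz))]
      exact congrArg (· :: []) ha
  induction hex with
  | done => exact Finset.empty_subset _
  | close P C p hp _ _ ih =>
    exact Finset.insert_subset (by simp [hmem hP hp]) (ih (Finset.sdiff_subset.trans hP))
  | merge P C p q hp hq hne _ _ _ _ =>
    exact absurd (by rw [hmem hP hp, hmem hP hq]) hne

/-- if for each cycle `p` closed by MGREEDY-RC some rotation of its open
superstring is a suffix of `x p`, then `‖T‖ ≤ ‖A‖`. -/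
theorem normT_le_normA
    (S : Finset Str) (hS : SubstrFree S)
    (C : Finset (List Str)) (hex : MGreedyCyc (S.image fun s => [s]) C)
    (x : List Str → Str)
    (hx : ∀ p ∈ C, ∃ j : ℕ, 1 ≤ j ∧ j ≤ p.length ∧ superstr (p.rotate j) <:+ x p) :
    ∑ p ∈ C, (superstr p).length ≤ ∑ p ∈ C, (x p).length := by
  refine Finset.sum_le_sum fun c hc => ?_
  obtain ⟨j, hj, hjc, hsuf⟩ := hx c hc
  refine le_trans ?_ hsuf.length_le
  by_cases hnil : [] ∈ S
  · -- Substring-freeness forces `S = {[]}`, and then every closed cycle is `[[]]`.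
    have hS₀ : S.image (fun s => [s]) ⊆ {[[]]} := by
      intro z hz
      obtain ⟨s, hs, rfl⟩ := Finset.mem_image.1 hz
      by_contra hne
      exact hS [] (.inl hnil) s (.inl hs) (by rintro rfl; simp at hne) nil_infix
    simp [Finset.mem_singleton.1 (hex.subset_singleton rfl hS₀ hc), superstr]
  · exact hex.length_superstr_le_rotate hS (greedyInv_image_singleton hS hnil) hc hj hjc
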